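/- Let X and Y be random variables on a finite probability space. For any c > 0, H_c(X,Y) ≤ H_c(X) + H_c(Y). -/

import Mathlib

open Real

/-- Joint t-entropy of a joint pmf `p : Fin n → Fin m → ℝ`. -/
noncomputable def tEntropyJoint {n m : ℕ} (c : ℝ) (p : Fin n → Fin m → ℝ) : ℝ :=
  (∑ i, ∑ j, p i j * Real.arctan ((p i j) ^ (-c))) - Real.pi / 4

/-- t-entropy of the first marginal of a joint pmf. -/
noncomputable def tEntropyMargX {n m : ℕ} (c : ℝ) (p : Fin n → Fin m → ℝ) : ℝ :=
  (∑ i, (∑ j, p i j) * Real.arctan ((∑ j, p i j) ^ (-c))) - Real.pi / 4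

/-- t-entropy of the second marginal of a joint pmf. -/
noncomputable def tEntropyMargY {n m : ℕ} (c : ℝ) (p : Fin n → Fin m → ℝ) : ℝ :=
  (∑ j, (∑ i, p i j) * Real.arctan ((∑ i, p i j) ^ (-c))) - Real.pi / 4

/-!
Write `f u = u * arctan (u ^ (-c))`, which is concave on `[0, 1]`. For `x, y ≥ 1` one has
`arctan (x * y) + π / 4 ≤ arctan x + arctan y`; applied to `x = P(X = i) ^ (-c)` and
`y = P(Y = j | X = i) ^ (-c)` it gives `H_c(X, Y) ≤ H_c(X) + H_c(Y | X)` cell by cell, and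
`H_c(Y | X) ≤ H_c(Y)` is Jensen's inequality for `f` in each column.
-/

open Finset

noncomputable def tEntropyTerm (c u : ℝ) : ℝ := u * arctan (u ^ (-c))

/-- For a joint pmf this is `∑ i, P(X = i) * H_c(Y | X = i)`: the offsets `P(X = i) * π / 4` add up
to `π / 4`. -/
noncomputable def tEntropyCond {n m : ℕ} (c : ℝ) (p : Fin n → Fin m → ℝ) : ℝ :=
  (∑ i, (∑ j, p i j) * ∑ j, tEntropyTerm c (p i j / ∑ k, p i k)) - π / 4

lemma arctan_add_arctan_le_pi_div_four_add_arctan_mul {u v : ℝ} (hu₀ : 0 < u) (hu₁ : u ≤ 1)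
    (hv₀ : 0 < v) (hv₁ : v ≤ 1) : arctan u + arctan v ≤ π / 4 + arctan (u * v) := by
  rcases (mul_le_one₀ hu₁ hv₀.le hv₁).lt_or_eq with huv | huv
  · have huv' : 1 * (u * v) < 1 := by rwa [one_mul]
    rw [arctan_add huv, ← arctan_one, arctan_add huv']
    apply arctan_strictMono.monotone
    rw [one_mul, div_le_div_iff_of_pos_right (by linarith)]
    nlinarith
  · obtain rfl : u = 1 := by nlinarith
    obtain rfl : v = 1 := by nlinarith
    simp [arctan_one]

lemma arctan_mul_add_pi_div_four_le_arctan_add_arctan {x y : ℝ} (hx : 1 ≤ x) (hy : 1 ≤ y) :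
    arctan (x * y) + π / 4 ≤ arctan x + arctan y := by
  have hx₀ : 0 < x := one_pos.trans_le hx
  have hy₀ : 0 < y := one_pos.trans_le hy
  have h := arctan_add_arctan_le_pi_div_four_add_arctan_mul (inv_pos.mpr hx₀)
    (inv_le_one_of_one_le₀ hx) (inv_pos.mpr hy₀) (inv_le_one_of_one_le₀ hy)
  rw [arctan_inv_of_pos hx₀, arctan_inv_of_pos hy₀, ← mul_inv,
    arctan_inv_of_pos (mul_pos hx₀ hy₀)] at h
  linarith

lemma hasDerivAt_mul_arctan_rpow (c : ℝ) {x : ℝ} (hx : 0 < x) :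
    HasDerivAt (fun u ↦ u * arctan (u ^ c))
      (arctan (x ^ c) + c * x ^ c / (1 + (x ^ c) ^ 2)) x := by
  refine ((hasDerivAt_id x).mul ((hasDerivAt_arctan (x ^ c)).comp x
    (hasDerivAt_rpow_const (p := c) (Or.inl hx.ne')))).congr_deriv ?_
  have hxc : x ^ c = x * x ^ (c - 1) := by
    rw [rpow_sub_one hx.ne', mul_div_cancel₀ _ hx.ne']
  simp only [Function.comp_apply, id_eq, one_mul]
  rw [hxc]
  field_simp

lemma convexOn_mul_arctan_rpow {c : ℝ} (hc : 0 ≤ c) :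
    ConvexOn ℝ (Set.Icc 0 1) (fun u : ℝ ↦ u * arctan (u ^ c)) := by
  apply MonotoneOn.convexOn_of_deriv (convex_Icc 0 1)
  · exact continuousOn_id.mul
      (continuous_arctan.comp_continuousOn (continuousOn_id.rpow_const fun _ _ ↦ Or.inr hc))
  · rw [interior_Icc]
    exact fun x hx ↦ (hasDerivAt_mul_arctan_rpow c hx.1).differentiableAt.differentiableWithinAt
  · rw [interior_Icc]
    intro a ha b hb hab
    rw [(hasDerivAt_mul_arctan_rpow c ha.1).deriv, (hasDerivAt_mul_arctan_rpow c hb.1).deriv]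
    have hab' : a ^ c ≤ b ^ c := rpow_le_rpow ha.1.le hab hc
    have ha₀ : 0 < a ^ c := rpow_pos_of_pos ha.1 c
    have hb₁ : b ^ c ≤ 1 := rpow_le_one hb.1.le hb.2.le hc
    -- `s ↦ s / (1 + s ^ 2)` is monotone on `[0, 1]`
    have hfrac : c * a ^ c / (1 + (a ^ c) ^ 2) ≤ c * b ^ c / (1 + (b ^ c) ^ 2) := by
      rw [div_le_div_iff₀ (by positivity) (by positivity)]
      nlinarith [mul_nonneg (mul_nonneg hc (sub_nonneg.2 hab'))
        (sub_nonneg.2 (mul_le_one₀ (hab'.trans hb₁) (ha₀.le.trans hab') hb₁))]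
    linarith [arctan_strictMono.monotone hab']

lemma concaveOn_tEntropyTerm {c : ℝ} (hc : 0 ≤ c) :
    ConcaveOn ℝ (Set.Icc 0 1) (tEntropyTerm c) := by
  -- `tEntropyTerm c u = π / 2 * u - u * arctan (u ^ c)`, as `arctan s⁻¹ = π / 2 - arctan s`
  refine (((concaveOn_id (convex_Icc 0 1)).smul (by positivity : 0 ≤ π / 2)).sub
    (convexOn_mul_arctan_rpow hc)).congr fun u hu ↦ ?_
  rcases hu.1.eq_or_lt with rfl | hu₀
  · simp [tEntropyTerm]
  · simp only [tEntropyTerm, Pi.sub_apply, id_eq, smul_eq_mul]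
    rw [rpow_neg hu₀.le, arctan_inv_of_pos (rpow_pos_of_pos hu₀ c)]
    ring

lemma tEntropyTerm_add_le {c : ℝ} (hc : 0 ≤ c) {a P : ℝ} (ha : 0 ≤ a) (haP : a ≤ P)
    (hP : P ≤ 1) :
    tEntropyTerm c a + a * (π / 4) ≤ a * arctan (P ^ (-c)) + P * tEntropyTerm c (a / P) := by
  rcases ha.eq_or_lt with rfl | ha₀
  · simp [tEntropyTerm]
  have hP₀ : 0 < P := ha₀.trans_le haP
  set t := a / P
  have ht₀ : 0 < t := div_pos ha₀ hP₀
  have hPt : P * t = a := mul_div_cancel₀ a hP₀.ne'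
  have key := arctan_mul_add_pi_div_four_le_arctan_add_arctan
    (one_le_rpow_of_pos_of_le_one_of_nonpos hP₀ hP (neg_nonpos.2 hc))
    (one_le_rpow_of_pos_of_le_one_of_nonpos ht₀ (div_le_one_of_le₀ haP hP₀.le) (neg_nonpos.2 hc))
  rw [← mul_rpow hP₀.le ht₀.le, hPt] at key
  calc tEntropyTerm c a + a * (π / 4) = a * (arctan (a ^ (-c)) + π / 4) := by
        rw [tEntropyTerm]; ring
    _ ≤ a * (arctan (P ^ (-c)) + arctan (t ^ (-c))) := by gcongr
    _ = a * arctan (P ^ (-c)) + P * tEntropyTerm c t := by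
        rw [tEntropyTerm, ← mul_assoc, hPt]; ring

section

variable {n m : ℕ} {c : ℝ} {p : Fin n → Fin m → ℝ}

lemma tEntropyJoint_le_tEntropyMargX_add_tEntropyCond (hc : 0 ≤ c) (hp : ∀ i j, 0 ≤ p i j)
    (hsum : ∑ i, ∑ j, p i j = 1) :
    tEntropyJoint c p ≤ tEntropyMargX c p + tEntropyCond c p := by
  have hrow : ∀ i j, p i j ≤ ∑ k, p i k := fun i j ↦
    single_le_sum (fun k _ ↦ hp i k) (mem_univ j)
  have hrow₁ : ∀ i, ∑ k, p i k ≤ 1 := fun i ↦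
    hsum ▸ single_le_sum (fun i _ ↦ sum_nonneg fun k _ ↦ hp i k) (mem_univ i)
  have hcell := sum_le_sum fun i (_ : i ∈ univ) ↦ sum_le_sum fun j (_ : j ∈ univ) ↦
    tEntropyTerm_add_le hc (hp i j) (hrow i j) (hrow₁ i)
  simp only [sum_add_distrib, ← sum_mul, ← mul_sum, hsum, one_mul] at hcell
  simp only [tEntropyJoint, tEntropyMargX, tEntropyCond, tEntropyTerm] at hcell ⊢
  linarith

lemma tEntropyCond_le_tEntropyMargY (hc : 0 ≤ c) (hp : ∀ i j, 0 ≤ p i j)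
    (hsum : ∑ i, ∑ j, p i j = 1) :
    tEntropyCond c p ≤ tEntropyMargY c p := by
  have hrow₀ : ∀ i, 0 ≤ ∑ k, p i k := fun i ↦ sum_nonneg fun k _ ↦ hp i k
  have hrow : ∀ i j, p i j ≤ ∑ k, p i k := fun i j ↦
    single_le_sum (fun k _ ↦ hp i k) (mem_univ j)
  -- Jensen in each column, with the row sums as weights
  have hjensen : ∀ j, ∑ i, (∑ k, p i k) * tEntropyTerm c (p i j / ∑ k, p i k) ≤
      tEntropyTerm c (∑ i, p i j) := fun j ↦ by
    have h := (concaveOn_tEntropyTerm hc).le_map_sum (fun i _ ↦ hrow₀ i) hsum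
      fun i _ ↦ ⟨div_nonneg (hp i j) (hrow₀ i), div_le_one_of_le₀ (hrow i j) (hrow₀ i)⟩
    have hcancel : ∀ i, (∑ k, p i k) * (p i j / ∑ k, p i k) = p i j := fun i ↦
      mul_div_cancel_of_imp' fun h0 ↦ le_antisymm (h0 ▸ hrow i j) (hp i j)
    simpa only [smul_eq_mul, hcancel] using h
  simp only [tEntropyCond, tEntropyMargY, mul_sum]
  rw [sum_comm]
  exact sub_le_sub_right (sum_le_sum fun j _ ↦ hjensen j) _

end

theorem tEntropy_joint_le_sum {n m : ℕ} (c : ℝ) (hc : 0 < c)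
    (p : Fin n → Fin m → ℝ) (hp : ∀ i j, 0 ≤ p i j)
    (hsum : ∑ i, ∑ j, p i j = 1) :
    tEntropyJoint c p ≤ tEntropyMargX c p + tEntropyMargY c p := by
  linarith [tEntropyJoint_le_tEntropyMargX_add_tEntropyCond hc.le hp hsum,
    tEntropyCond_le_tEntropyMargY hc.le hp hsum]
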